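/- Let a be a non-increasing, summable sequence of positive real numbers with tails rₙ^{(a)} and associated dimension function h_a, and suppose the inverse function h_a⁻¹ is doubling. Then every non-increasing summable positive sequence b that is weak tail-equivalent to a is in fact tail-equivalent to a: there exist constants c₁,c₂>0 with c₁ ≤ rₙ^{(b)}/rₙ^{(a)} ≤ c₂ for all n. -/

import Mathlib

open Set Filter Metric MeasureTheory
open scoped ENNReal NNReal Topology

noncomputable section

/-- The `h`-Hausdorff measure of `E ⊆ ℝ`:
`H^h(E) = lim_{δ→0⁺} inf {Σᵢ h(|Eᵢ|) : E ⊆ ⋃ᵢ Eᵢ, |Eᵢ| ≤ δ}`.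
Since the inner infimum is antitone in `δ`, the limit as `δ → 0⁺` is the
supremum over `0 < δ ≤ A` (the parameter `A` records the domain `(0,A]` of the
dimension function `h`; by monotonicity the value of the limit is unchanged). -/
def Hh (A : ℝ) (h : ℝ → ℝ≥0∞) (E : Set ℝ) : ℝ≥0∞ :=
  ⨆ (δ : ℝ) (_ : 0 < δ) (_ : δ ≤ A),
    ⨅ (t : ℕ → Set ℝ) (_ : E ⊆ ⋃ n, t n) (_ : ∀ n, Metric.diam (t n) ≤ δ),
      ∑' n, h (Metric.diam (t n))

/-- A `δ`-packing of `E`: a countable disjoint family of open balls centered at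
points of `E` with diameters less than `δ`, recorded as a set of
(center, radius) pairs. -/
def IsPacking (E : Set ℝ) (δ : ℝ) (P : Set (ℝ × ℝ)) : Prop :=
  P.Countable ∧ (∀ p ∈ P, p.1 ∈ E ∧ 0 < p.2 ∧ 2 * p.2 < δ) ∧
    P.PairwiseDisjoint fun p => Metric.ball p.1 p.2

/-- The `h`-packing pre-measure of `E ⊆ ℝ`:
`P₀^h(E) = lim_{δ→0⁺} sup {Σᵢ h(|Bᵢ|) : {Bᵢ} is a δ-packing of E}`.
The inner supremum is monotone in `δ`, so the limit as `δ → 0⁺` is the infimum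
over `0 < δ ≤ A`. -/
def P0h (A : ℝ) (h : ℝ → ℝ≥0∞) (E : Set ℝ) : ℝ≥0∞ :=
  ⨅ (δ : ℝ) (_ : 0 < δ) (_ : δ ≤ A),
    ⨆ (P : Set (ℝ × ℝ)) (_ : IsPacking E δ P), ∑' p : P, h (2 * (p : ℝ × ℝ).2)

/-- The `h`-packing measure: `P^h(E) = inf {Σᵢ P₀^h(Eᵢ) : E = ⋃ᵢ Eᵢ}`. -/
def Ph (A : ℝ) (h : ℝ → ℝ≥0∞) (E : Set ℝ) : ℝ≥0∞ :=
  ⨅ (t : ℕ → Set ℝ) (_ : E = ⋃ n, t n), ∑' n, P0h A h (t n)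

/-- `h` is a dimension function with domain `(0, A]`: continuous, increasing,
doubling, positive, with `h(x) → 0` as `x → 0⁺`.  We record partial functions
`(0,A] → (0,∞]` as functions `ℝ → ℝ≥0∞` extended by `0` on nonpositive
arguments (the continuous extension at `0`). -/
structure IsDimFun (A : ℝ) (h : ℝ → ℝ≥0∞) : Prop where
  posA : 0 < A
  zero_of_nonpos : ∀ x : ℝ, x ≤ 0 → h x = 0
  pos : ∀ x ∈ Set.Ioc (0 : ℝ) A, 0 < h x
  continuousOn : ContinuousOn h (Set.Ioc 0 A)
  strictMonoOn : StrictMonoOn h (Set.Ioc 0 A)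
  doubling : ∃ τ : ℝ≥0∞, 0 < τ ∧ τ ≠ ∞ ∧ ∀ x : ℝ, 0 < x → 2 * x ≤ A → τ * h (2 * x) ≤ h x
  tendsto_zero : Tendsto h (nhdsWithin 0 (Set.Ioi 0)) (nhds 0)

/-- `f ≼ h` on `(0, A]`: there is a (finite, positive) constant `c` with
`f(x) ≤ c·h(x)` for all `x ∈ (0,A]`. -/
def FLeq (A : ℝ) (f h : ℝ → ℝ≥0∞) : Prop :=
  ∃ c : ℝ≥0∞, 0 < c ∧ c ≠ ∞ ∧ ∀ x ∈ Set.Ioc (0 : ℝ) A, f x ≤ c * h x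

/-- `f ≡ h` on `(0, A]`: `f ≼ h` and `h ≼ f`. -/
def FEquiv (A : ℝ) (f h : ℝ → ℝ≥0∞) : Prop := FLeq A f h ∧ FLeq A h f

/-- Tail of a series: `rTail a n = Σ_{j ≥ n} a j` (0-based indexing, so the
paper's `r_n`, `n ≥ 1`, is `rTail a (n-1)`). -/
def rTail (a : ℕ → ℝ) (n : ℕ) : ℝ := ∑' k : ℕ, a (n + k)

/-- In the Cantor construction for the gap sequence `a`, the gaps are indexed
by the nodes `m ≥ 1` of the infinite binary tree in heap order (node `m` has
children `2m, 2m+1`), the gap at node `m` having length `a (m-1)`.  `nodeLen a m`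
is the sum of the lengths of all gaps in the subtree rooted at `m`, i.e. the
length of the step interval corresponding to node `m`. -/
def nodeLen (a : ℕ → ℝ) (m : ℕ) : ℝ :=
  ∑' k : ℕ, ∑ i ∈ Finset.range (2 ^ k), a (m * 2 ^ k + i - 1)

/-- Left endpoint of the `j`-th (0 ≤ j < 2^k, left to right) step-`k` interval
in the Cantor construction for the gap sequence `a` (realized in `[0, Σ a]`):
a left child keeps its parent's left endpoint; a right child's interval starts
after its left sibling's interval followed by the parent's gap. -/
def leftEnd (a : ℕ → ℝ) : ℕ → ℕ → ℝ
  | 0, _ => 0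
  | (k + 1), j =>
    if j % 2 = 0 then leftEnd a k (j / 2)
    else leftEnd a k (j / 2) + nodeLen a (2 ^ (k + 1) + j - 1) + a (2 ^ k + j / 2 - 1)

/-- The Cantor set `C_a` associated with a (positive, non-increasing, summable)
sequence `a`, realized inside the interval `[0, Σ a]`: the intersection over
`k` of the unions of the `2^k` step-`k` intervals. -/
def cantorSetOf (a : ℕ → ℝ) : Set ℝ :=
  ⋂ k : ℕ, ⋃ j ∈ Finset.range (2 ^ k),
    Set.Icc (leftEnd a k j) (leftEnd a k j + nodeLen a (2 ^ k + j))

/-- `h` (increasing and continuous on `(0, A]`) is associated to the sequence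
`a`: the sequence `{h(r_n/n)}` is equivalent to `{1/n}`, i.e. there are
constants `0 < c₁, c₂ < ∞` with `c₁ ≤ n · h(r_n/n) ≤ c₂` for all `n ≥ 1`
(0-based: `n ≥ 1` corresponds to `n+1` below). -/
def IsAssociated (A : ℝ) (h : ℝ → ℝ≥0∞) (a : ℕ → ℝ) : Prop :=
  ContinuousOn h (Set.Ioc 0 A) ∧ StrictMonoOn h (Set.Ioc 0 A) ∧
  ∃ c₁ c₂ : ℝ≥0∞, 0 < c₁ ∧ c₂ ≠ ∞ ∧ ∀ n : ℕ,
    c₁ ≤ ((n : ℝ≥0∞) + 1) * h (rTail a n / ((n : ℝ) + 1)) ∧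
    ((n : ℝ≥0∞) + 1) * h (rTail a n / ((n : ℝ) + 1)) ≤ c₂

/-- Weak tail-equivalence: there are positive integers `j, k` with
`r_n^{(a)} ≥ r_{jn}^{(b)}/j` and `r_n^{(b)} ≥ r_{kn}^{(a)}/k` for all `n ≥ 1`
(0-based shift: paper's `r_n` is `rTail · (n-1)`). -/
def WeakTailEquiv (a b : ℕ → ℝ) : Prop :=
  ∃ j k : ℕ, 0 < j ∧ 0 < k ∧
    (∀ n : ℕ, rTail b (j * (n + 1) - 1) / (j : ℝ) ≤ rTail a n) ∧
    (∀ n : ℕ, rTail a (k * (n + 1) - 1) / (k : ℝ) ≤ rTail b n)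

/-- Tail-equivalence: the sequences of tails are equivalent, i.e. the ratios
`r_n^{(a)}/r_n^{(b)}` are bounded above and below by positive constants. -/
def TailEquiv (a b : ℕ → ℝ) : Prop :=
  ∃ c₁ c₂ : ℝ, 0 < c₁ ∧ ∀ n : ℕ,
    c₁ ≤ rTail a n / rTail b n ∧ rTail a n / rTail b n ≤ c₂

/-- The Hausdorff dimension of `E`, computed from the `h_s`-Hausdorff measures,
`h_s(x) = x^s`:  `dim_H E = sup {s > 0 : H^{h_s}(E) = ∞}`. -/
def hausdDim (A : ℝ) (E : Set ℝ) : ℝ≥0∞ :=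
  ⨆ (s : ℝ) (_ : 0 < s) (_ : Hh A (fun x => ENNReal.ofReal (x ^ s)) E = ∞),
    ENNReal.ofReal s

/-- The packing dimension of `E`: `dim_P E = sup {s > 0 : P^{h_s}(E) = ∞}`. -/
def packDim (A : ℝ) (E : Set ℝ) : ℝ≥0∞ :=
  ⨆ (s : ℝ) (_ : 0 < s) (_ : Ph A (fun x => ENNReal.ofReal (x ^ s)) E = ∞),
    ENNReal.ofReal s

/-- The pre-packing dimension of `E`: `dim_{P₀} E = sup {s > 0 : P₀^{h_s}(E) = ∞}`. -/
def prePackDim (A : ℝ) (E : Set ℝ) : ℝ≥0∞ :=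
  ⨆ (s : ℝ) (_ : 0 < s) (_ : P0h A (fun x => ENNReal.ofReal (x ^ s)) E = ∞),
    ENNReal.ofReal s

/-- `f ≼ h` on the set `S`, for real-valued functions. -/
def RLeqOn (S : Set ℝ) (f h : ℝ → ℝ) : Prop :=
  ∃ c : ℝ, 0 < c ∧ ∀ x ∈ S, f x ≤ c * h x

/-- `f ≡ h` on the set `S`, for real-valued functions. -/
def REquivOn (S : Set ℝ) (f h : ℝ → ℝ) : Prop := RLeqOn S f h ∧ RLeqOn S h f

/-- Real-valued version of `IsAssociated`: `h : (0,A] → (0,∞)` is increasing,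
continuous, positive and `{h(r_n/n)} ≡ {1/n}`. -/
def IsAssociatedR (A : ℝ) (h : ℝ → ℝ) (a : ℕ → ℝ) : Prop :=
  ContinuousOn h (Set.Ioc 0 A) ∧ StrictMonoOn h (Set.Ioc 0 A) ∧
  (∀ x ∈ Set.Ioc (0 : ℝ) A, 0 < h x) ∧
  ∃ c₁ c₂ : ℝ, 0 < c₁ ∧ ∀ n : ℕ,
    c₁ ≤ ((n : ℝ) + 1) * h (rTail a n / ((n : ℝ) + 1)) ∧
    ((n : ℝ) + 1) * h (rTail a n / ((n : ℝ) + 1)) ≤ c₂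

end

/-! Since `n · h_a(rₙ/n)` is bounded above and below, `h_a(rₙ/n) ≤ 2^M h_a(r_{Jn}/(Jn))` for a
fixed `M` depending only on `J`; applying the doubling inequality for `h_a⁻¹` `M` times gives
`r_{Jn} ≥ C_J rₙ`. This dilation bound turns both inequalities of weak tail-equivalence,
which compare `rₙ` with tails at the dilated index `jn`, into comparisons at the same index. -/

section Tails

variable {a : ℕ → ℝ}

lemma summable_nat_add_left (asum : Summable a) (n : ℕ) : Summable fun k => a (n + k) := by
  simpa only [add_comm n] using (summable_nat_add_iff n).2 asum

lemma rTail_pos (apos : ∀ n, 0 < a n) (asum : Summable a) (n : ℕ) : 0 < rTail a n :=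
  (summable_nat_add_left asum n).tsum_pos (fun _ => (apos _).le) 0 (apos _)

lemma rTail_eq_add_rTail_succ (asum : Summable a) (n : ℕ) :
    rTail a n = a n + rTail a (n + 1) := by
  simp only [rTail, (summable_nat_add_left asum n).tsum_eq_zero_add, add_zero, add_assoc,
    add_comm 1]

lemma rTail_antitone (anonneg : ∀ n, 0 ≤ a n) (asum : Summable a) : Antitone (rTail a) :=
  antitone_nat_of_succ_le fun n => by
    rw [rTail_eq_add_rTail_succ asum n]
    linarith [anonneg n]

end Tails

lemma pow_mul_le_of_le_two_pow_mul {T : Set ℝ} {g : ℝ → ℝ} {τ : ℝ} (hτ : 0 ≤ τ)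
    (hT : ∀ y ∈ T, y / 2 ∈ T) (hg : MonotoneOn g T)
    (hdoub : ∀ y ∈ T, 2 * y ∈ T → τ * g (2 * y) ≤ g y) (m : ℕ) {y z : ℝ} (hy : y ∈ T)
    (hz : z ∈ T) (hyz : y ≤ 2 ^ m * z) : τ ^ m * g y ≤ g z := by
  induction m generalizing y with
  | zero => simpa using hg hy hz (by simpa using hyz)
  | succ m ih =>
    have hhalf : y / 2 ≤ 2 ^ m * z := by rw [pow_succ] at hyz; linarith
    calc τ ^ (m + 1) * g y = τ ^ m * (τ * g (2 * (y / 2))) := by ring_nf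
      _ ≤ τ ^ m * g (y / 2) := by
          gcongr
          exact hdoub _ (hT y hy) (by rwa [mul_div_cancel₀ y two_ne_zero])
      _ ≤ g z := ih (hT y hy) hhalf

lemma monotoneOn_image_of_leftInvOn {S : Set ℝ} {f g : ℝ → ℝ} (hf : StrictMonoOn f S)
    (hinv : ∀ x ∈ S, g (f x) = x) : MonotoneOn g (f '' S) := by
  rintro _ ⟨u, hu, rfl⟩ _ ⟨v, hv, rfl⟩ huv
  rw [hinv u hu, hinv v hv]
  exact (hf.le_iff_le hu hv).1 huv

section Associated

variable {A : ℝ} {ha : ℝ → ℝ} {a : ℕ → ℝ}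

lemma rTail_div_succ_mem_Ioc (apos : ∀ n, 0 < a n) (asum : Summable a) (hra : rTail a 0 ≤ A)
    (n : ℕ) : rTail a n / ((n : ℝ) + 1) ∈ Set.Ioc 0 A := by
  have hr := rTail_pos apos asum n
  refine ⟨by positivity, ?_⟩
  calc rTail a n / ((n : ℝ) + 1) ≤ rTail a n :=
        div_le_self hr.le (by linarith [n.cast_nonneg (α := ℝ)])
    _ ≤ rTail a 0 := rTail_antitone (fun k => (apos k).le) asum n.zero_le
    _ ≤ A := hra

lemma half_mem_image_of_isAssociatedR (apos : ∀ n, 0 < a n) (asum : Summable a)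
    (hra : rTail a 0 ≤ A) (haa : IsAssociatedR A ha a) {y : ℝ} (hy : y ∈ ha '' Set.Ioc 0 A) :
    y / 2 ∈ ha '' Set.Ioc 0 A := by
  obtain ⟨hcont, -, hpos, _, c₂, -, hbound⟩ := haa
  obtain ⟨x, hx, rfl⟩ := hy
  have hhalf : 0 < ha x / 2 := half_pos (hpos x hx)
  -- `ha (rₙ / (n + 1)) ≤ c₂ / (n + 1)` eventually drops below `ha x / 2`; then apply the IVT
  obtain ⟨n, hn⟩ := exists_nat_gt (c₂ / (ha x / 2))
  have hn1 : (0 : ℝ) < n + 1 := by positivity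
  have hsmall : ha (rTail a n / ((n : ℝ) + 1)) ≤ ha x / 2 := by
    rw [div_lt_iff₀ hhalf] at hn
    nlinarith [(hbound n).2, hpos _ (rTail_div_succ_mem_Ioc apos asum hra n)]
  exact isPreconnected_Ioc.intermediate_value (rTail_div_succ_mem_Ioc apos asum hra n) hx hcont
    ⟨hsmall, by linarith⟩

lemma exists_mul_rTail_le_rTail_mul (apos : ∀ n, 0 < a n) (asum : Summable a)
    (hra : rTail a 0 ≤ A) {ha' : ℝ → ℝ} (haa : IsAssociatedR A ha a)
    (hinv : ∀ x ∈ Set.Ioc (0 : ℝ) A, ha' (ha x) = x) {τ : ℝ} (hτ : 0 < τ)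
    (hdoub : ∀ y ∈ ha '' Set.Ioc (0 : ℝ) A, 2 * y ∈ ha '' Set.Ioc (0 : ℝ) A →
      τ * ha' (2 * y) ≤ ha' y)
    {J : ℕ} (hJ : 0 < J) : ∃ C, 0 < C ∧ ∀ n, C * rTail a n ≤ rTail a (J * (n + 1) - 1) := by
  obtain ⟨c₁, c₂, hc₁, hbound⟩ := haa.2.2.2
  obtain ⟨M, hM⟩ := pow_unbounded_of_one_lt (c₂ * J / c₁) one_lt_two
  rw [div_lt_iff₀ hc₁] at hM
  have hJ' : (0 : ℝ) < J := by exact_mod_cast hJ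
  refine ⟨τ ^ M * J, by positivity, fun n => ?_⟩
  set N := J * (n + 1) - 1
  have hN : (N : ℝ) + 1 = J * ((n : ℝ) + 1) := by
    have : N + 1 = J * (n + 1) := Nat.sub_add_cancel (Nat.one_le_iff_ne_zero.2 (by positivity))
    exact_mod_cast this
  have hxn := rTail_div_succ_mem_Ioc apos asum hra n
  have hxN := rTail_div_succ_mem_Ioc apos asum hra N
  have hle : ha (rTail a n / ((n : ℝ) + 1)) ≤ 2 ^ M * ha (rTail a N / ((N : ℝ) + 1)) := by
    refine le_of_mul_le_mul_left ?_ (by positivity : (0 : ℝ) < J * (n + 1))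
    calc J * ((n : ℝ) + 1) * ha (rTail a n / ((n : ℝ) + 1))
        = J * (((n : ℝ) + 1) * ha (rTail a n / ((n : ℝ) + 1))) := by ring
      _ ≤ c₂ * J := by rw [mul_comm]; gcongr; exact (hbound n).2
      _ ≤ 2 ^ M * c₁ := hM.le
      _ ≤ 2 ^ M * (((N : ℝ) + 1) * ha (rTail a N / ((N : ℝ) + 1))) := by
          gcongr; exact (hbound N).1
      _ = _ := by rw [hN]; ring
  have key := pow_mul_le_of_le_two_pow_mul hτ.le
    (fun y hy => half_mem_image_of_isAssociatedR apos asum hra haa hy)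
    (monotoneOn_image_of_leftInvOn haa.2.1 hinv) hdoub M ⟨_, hxn, rfl⟩ ⟨_, hxN, rfl⟩ hle
  rw [hinv _ hxn, hinv _ hxN, hN, le_div_iff₀ (by positivity)] at key
  have hn1 : (n : ℝ) + 1 ≠ 0 := by positivity
  calc τ ^ M * J * rTail a n = τ ^ M * (rTail a n / ((n : ℝ) + 1)) * (J * ((n : ℝ) + 1)) := by
        field_simp
    _ ≤ rTail a N := key

end Associated

lemma Nat.exists_sub_one_le_le_two_mul_sub_one {j n : ℕ} (hj : 0 < j) (hjn : j ≤ n + 1) :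
    ∃ m, j * (m + 1) - 1 ≤ n ∧ n ≤ 2 * j * (m + 1) - 1 := by
  obtain ⟨q, hq, hq₁, hq₂⟩ : ∃ q, 0 < q ∧ j * q ≤ n + 1 ∧ n + 1 < j * q + j :=
    ⟨(n + 1) / j, Nat.div_pos hjn hj, Nat.mul_div_le (n + 1) j,
      by linarith [Nat.div_add_mod (n + 1) j, Nat.mod_lt (n + 1) hj]⟩
  have hjq : j ≤ j * q := Nat.le_mul_of_pos_right j hq
  refine ⟨q - 1, ?_, ?_⟩ <;> rw [Nat.sub_add_cancel hq]
  · omega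
  · rw [mul_assoc]; omega

section WeakTailEquiv

variable {a b : ℕ → ℝ}

lemma exists_rTail_le_mul_rTail (apos : ∀ n, 0 < a n) (asum : Summable a)
    (bnonneg : ∀ n, 0 ≤ b n) (bsum : Summable b) {j : ℕ} (hj : 0 < j)
    (hjb : ∀ n, rTail b (j * (n + 1) - 1) / j ≤ rTail a n) {C : ℝ} (hC : 0 < C)
    (hdil : ∀ n, C * rTail a n ≤ rTail a (2 * j * (n + 1) - 1)) :
    ∃ c, ∀ n, rTail b n ≤ c * rTail a n := by
  have ha_anti := rTail_antitone (fun k => (apos k).le) asum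
  have hb_anti := rTail_antitone bnonneg bsum
  have hj' : (0 : ℝ) < j := by exact_mod_cast hj
  refine ⟨max (rTail b 0 / rTail a (j - 1)) (j / C), fun n => ?_⟩
  have hran := rTail_pos apos asum n
  rcases lt_or_ge (n + 1) j with hsmall | hlarge
  · have hpos := rTail_pos apos asum (j - 1)
    calc rTail b n ≤ rTail b 0 / rTail a (j - 1) * rTail a (j - 1) := by
          rw [div_mul_cancel₀ _ hpos.ne']; exact hb_anti n.zero_le
      _ ≤ rTail b 0 / rTail a (j - 1) * rTail a n := by
          gcongr
          · exact div_nonneg (tsum_nonneg fun k => bnonneg _) hpos.le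
          · exact ha_anti (by omega)
      _ ≤ _ := by gcongr; exact le_max_left _ _
  · obtain ⟨m, hm₁, hm₂⟩ := Nat.exists_sub_one_le_le_two_mul_sub_one hj hlarge
    calc rTail b n ≤ rTail b (j * (m + 1) - 1) := hb_anti hm₁
      _ ≤ rTail a m * j := (div_le_iff₀ hj').1 (hjb m)
      _ = j / C * (C * rTail a m) := by field_simp
      _ ≤ j / C * rTail a n := by gcongr; exact (hdil m).trans (ha_anti hm₂)
      _ ≤ _ := by gcongr; exact le_max_right _ _

lemma tailEquiv_of_weakTailEquiv_of_dilation (apos : ∀ n, 0 < a n) (asum : Summable a)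
    (bnonneg : ∀ n, 0 ≤ b n) (bsum : Summable b)
    (hdil : ∀ J : ℕ, 0 < J → ∃ C, 0 < C ∧ ∀ n, C * rTail a n ≤ rTail a (J * (n + 1) - 1))
    (hw : WeakTailEquiv a b) : TailEquiv b a := by
  obtain ⟨j, k, hj, hk, hjb, hkb⟩ := hw
  obtain ⟨Cₖ, hCₖ, hdilₖ⟩ := hdil k hk
  obtain ⟨C₂ⱼ, hC₂ⱼ, hdil₂ⱼ⟩ := hdil (2 * j) (by omega)
  obtain ⟨c, hc⟩ := exists_rTail_le_mul_rTail apos asum bnonneg bsum hj hjb hC₂ⱼ hdil₂ⱼ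
  have hk' : (0 : ℝ) < k := by exact_mod_cast hk
  refine ⟨Cₖ / k, c, by positivity, fun n => ?_⟩
  have hran := rTail_pos apos asum n
  refine ⟨?_, (div_le_iff₀ hran).2 (hc n)⟩
  rw [le_div_iff₀ hran, div_mul_eq_mul_div, div_le_iff₀ hk']
  calc Cₖ * rTail a n ≤ rTail a (k * (n + 1) - 1) := hdilₖ n
    _ ≤ rTail b n * k := (div_le_iff₀ hk').1 (hkb n)

end WeakTailEquiv

theorem tailEquiv_of_weakTailEquiv_of_inv_doubling_general (A : ℝ)
    (a : ℕ → ℝ)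
    (apos : ∀ n, 0 < a n) (asum : Summable a)
    (hra : rTail a 0 ≤ A)
    (ha ha' : ℝ → ℝ) (haa : IsAssociatedR A ha a)
    (hinv : ∀ x ∈ Set.Ioc (0 : ℝ) A, ha' (ha x) = x)
    (hdoub : ∃ τ : ℝ, 0 < τ ∧ ∀ y : ℝ, y ∈ ha '' Set.Ioc (0 : ℝ) A →
      2 * y ∈ ha '' Set.Ioc (0 : ℝ) A → τ * ha' (2 * y) ≤ ha' y) :
    ∀ b : ℕ → ℝ, (∀ n, 0 < b n) → (∀ n, b (n + 1) ≤ b n) → Summable b →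
      WeakTailEquiv a b → TailEquiv b a := by
  intro b bpos _ bsum hw
  obtain ⟨τ, hτ, hdoub⟩ := hdoub
  exact tailEquiv_of_weakTailEquiv_of_dilation apos asum (fun n => (bpos n).le) bsum
    (fun _ hJ => exists_mul_rTail_le_rTail_mul apos asum hra haa hinv hτ hdoub hJ) hw

/-- Theorem, (2) ⇒ (3): if the dimension function `h_a`
associated to `a` has a doubling inverse `h_a⁻¹`, then every non-increasing
summable positive sequence `b` that is weak tail-equivalent to `a` is in fact
tail-equivalent to `a`: there are constants `0 < c₁ ≤ c₂` with
`c₁ ≤ rₙ^{(b)}/rₙ^{(a)} ≤ c₂` for all `n`. -/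
theorem tailEquiv_of_weakTailEquiv_of_inv_doubling (A : ℝ) (hA : 0 < A)
    (a : ℕ → ℝ)
    (apos : ∀ n, 0 < a n) (amono : ∀ n, a (n + 1) ≤ a n) (asum : Summable a)
    (hra : rTail a 0 ≤ A)
    (ha ha' : ℝ → ℝ) (haa : IsAssociatedR A ha a)
    (hinv : ∀ x ∈ Set.Ioc (0 : ℝ) A, ha' (ha x) = x)
    (hdoub : ∃ τ : ℝ, 0 < τ ∧ ∀ y : ℝ, y ∈ ha '' Set.Ioc (0 : ℝ) A →
      2 * y ∈ ha '' Set.Ioc (0 : ℝ) A → τ * ha' (2 * y) ≤ ha' y) :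
    ∀ b : ℕ → ℝ, (∀ n, 0 < b n) → (∀ n, b (n + 1) ≤ b n) → Summable b →
      WeakTailEquiv a b → TailEquiv b a :=
  tailEquiv_of_weakTailEquiv_of_inv_doubling_general A a apos asum hra ha ha' haa hinv hdoub
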